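/- arXiv:math/0302011 — 4 statements merged into one kernel-verified Lean document; each statement's English description precedes it below -/
import Mathlib

section
/- For every compact set K ⊆ ℍ^n, the ℋ_RSL(ℍ^n)-convex hull K̂ of K is contained in the real convex hull convexHull ℝ K of K. -/
/-!
If `z ∉ conv K`, then, `conv K` being compact (Carathéodory), Hahn–Banach gives a real linear
functional `ℓ` on `ℍ^n` and `c` with `ℓ < c` on `conv K` and `c < ℓ z`. In the complex coordinates
`(t, conj u)` of `ℍ^n`, `ℓ` is the real part of a complex linear form `g`; then `F = exp g`, viewed
as a quaternion with zero `j`-part, is RSS and `‖F‖ = exp ℓ` separates `z` from `K`.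
-/

noncomputable section

open scoped ComplexConjugate

/-- The first complex component of a quaternion `q = t + u·j`, identifying `ℂ` with the
real span of `1` and `i` inside the quaternions: `t = q.re + q.imI * I`. -/
def qt (q : Quaternion ℝ) : ℂ := ⟨q.re, q.imI⟩

/-- The second complex component of a quaternion `q = t + u·j`: `u = q.imJ + q.imK * I`. -/
def qu (q : Quaternion ℝ) : ℂ := ⟨q.imJ, q.imK⟩

/-- The quaternion `t + u·j` built from two complex numbers. -/
def mkQ (t u : ℂ) : Quaternion ℝ := ⟨t.re, t.im, u.re, u.im⟩

/-- `f : ℍ^n → ℍ` is right superlinearly superdifferentiable (RSS) on `U`: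
writing `f = f₁ + f₂·j` with `f₁ = qt ∘ f`, `f₂ = qu ∘ f`, and each coordinate
`z_k = t_k + u_k·j`, the component `f₁` is jointly holomorphic in `(t₁,…,t_n)` and
antiholomorphic in `(u₁,…,u_n)` (i.e. `(t, v) ↦ f₁` at `u_k = conj (v_k)` is jointly
holomorphic), and `f₂` is jointly holomorphic in the `u`'s and antiholomorphic in the `t`'s. -/
def RSS {n : ℕ} (U : Set (Fin n → Quaternion ℝ))
    (f : (Fin n → Quaternion ℝ) → Quaternion ℝ) : Prop :=
  DifferentiableOn ℂ
    (fun p : (Fin n → ℂ) × (Fin n → ℂ) =>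
      qt (f fun k => mkQ (p.1 k) (conj (p.2 k))))
    {p | (fun k => mkQ (p.1 k) (conj (p.2 k))) ∈ U} ∧
  DifferentiableOn ℂ
    (fun p : (Fin n → ℂ) × (Fin n → ℂ) =>
      qu (f fun k => mkQ (conj (p.1 k)) (p.2 k)))
    {p | (fun k => mkQ (conj (p.1 k)) (p.2 k)) ∈ U}

/-- The `ℋ_RSL(ℍ^n)`-convex hull of a compact set `K ⊆ ℍ^n`:
all `z` with `‖f z‖ ≤ sup_{ζ ∈ K} ‖f ζ‖` for every `f` RSS on all of `ℍ^n`. -/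
def rslHull {n : ℕ} (K : Set (Fin n → Quaternion ℝ)) : Set (Fin n → Quaternion ℝ) :=
  {z | ∀ f : (Fin n → Quaternion ℝ) → Quaternion ℝ,
    RSS Set.univ f → ‖f z‖ ≤ ⨆ ζ ∈ K, ‖f ζ‖}

section Caratheodory

variable {𝕜 E : Type*} [Field 𝕜] [LinearOrder 𝕜] [IsStrictOrderedRing 𝕜] [AddCommGroup E]
  [Module 𝕜 E] [FiniteDimensional 𝕜 E]

theorem exists_fin_convexCombination_of_mem_convexHull {s : Set E} {x : E}
    (hx : x ∈ convexHull 𝕜 s) :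
    ∃ m ≤ Module.finrank 𝕜 E + 1, ∃ w ∈ stdSimplex 𝕜 (Fin m), ∃ y : Fin m → E,
      (∀ i, y i ∈ s) ∧ ∑ i, w i • y i = x := by
  obtain ⟨ι, _, z, w, hzs, hz, hw₀, hw₁, rfl⟩ := eq_pos_convex_span_of_mem_convexHull hx
  let e := Fintype.equivFin ι
  refine ⟨Fintype.card ι, ?_, w ∘ e.symm, ⟨fun i => (hw₀ _).le, ?_⟩, z ∘ e.symm,
    fun i => hzs ⟨_, rfl⟩, ?_⟩
  · exact hz.card_le_finrank_succ.trans (Nat.add_le_add_right (Submodule.finrank_le _) 1)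
  · simpa only [Function.comp_apply] using (e.symm.sum_comp w).trans hw₁
  · exact e.symm.sum_comp fun i => w i • z i

end Caratheodory

section CompactConvexHull

variable {E : Type*} [NormedAddCommGroup E] [NormedSpace ℝ E] [FiniteDimensional ℝ E]

theorem IsCompact.convexHull_of_finiteDimensional {K : Set E} (hK : IsCompact K) :
    IsCompact (convexHull ℝ K) := by
  have hhull : convexHull ℝ K = ⋃ m ∈ Set.Iic (Module.finrank ℝ E + 1),
      (fun p : (Fin m → ℝ) × (Fin m → E) => ∑ i, p.1 i • p.2 i) ''
        (stdSimplex ℝ (Fin m) ×ˢ Set.univ.pi fun _ => K) := by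
    ext x
    simp only [Set.mem_iUnion, Set.mem_image, Set.mem_prod, Set.mem_univ_pi, Prod.exists]
    constructor
    · intro hx
      obtain ⟨m, hm, w, hw, y, hy, rfl⟩ := exists_fin_convexCombination_of_mem_convexHull hx
      exact ⟨m, hm, w, y, ⟨hw, hy⟩, rfl⟩
    · rintro ⟨m, -, w, y, ⟨hw, hy⟩, rfl⟩
      exact mem_convexHull_of_exists_fintype w y hw.1 hw.2 hy rfl
  rw [hhull]
  refine (Set.finite_Iic _).isCompact_biUnion fun m _ => ?_
  exact ((isCompact_stdSimplex ℝ (Fin m)).prod (isCompact_univ_pi fun _ => hK)).image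
    (by fun_prop)

end CompactConvexHull

@[simp] theorem qt_mkQ (t u : ℂ) : qt (mkQ t u) = t := rfl

@[simp] theorem qu_mkQ (t u : ℂ) : qu (mkQ t u) = u := rfl

@[simp] theorem re_mkQ (t u : ℂ) : (mkQ t u).re = t.re := rfl

@[simp] theorem imI_mkQ (t u : ℂ) : (mkQ t u).imI = t.im := rfl

@[simp] theorem imJ_mkQ (t u : ℂ) : (mkQ t u).imJ = u.re := rfl

@[simp] theorem imK_mkQ (t u : ℂ) : (mkQ t u).imK = u.im := rfl

@[simp] theorem mkQ_qt_qu (q : Quaternion ℝ) : mkQ (qt q) (qu q) = q := rfl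

theorem norm_mkQ_zero (t : ℂ) : ‖mkQ t 0‖ = ‖t‖ := by
  rw [norm_eq_sqrt_real_inner, Quaternion.inner_self, Quaternion.normSq_def',
    Complex.norm_def, Complex.normSq_apply]
  simp [sq]

section ComplexCoords

variable {n : ℕ}

-- The chart in which the first clause of `RSS` asks for holomorphy.
def ofComplexCoords : ((Fin n → ℂ) × (Fin n → ℂ)) →ₗ[ℝ] (Fin n → Quaternion ℝ) where
  toFun p k := mkQ (p.1 k) (conj (p.2 k))
  map_add' p q := by funext k; ext <;> simp
  map_smul' c p := by funext k; ext <;> simp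

def toComplexCoords (z : Fin n → Quaternion ℝ) : (Fin n → ℂ) × (Fin n → ℂ) :=
  (fun k => qt (z k), fun k => conj (qu (z k)))

@[simp] theorem ofComplexCoords_toComplexCoords (z : Fin n → Quaternion ℝ) :
    ofComplexCoords (toComplexCoords z) = z := by
  ext k : 1
  simp [ofComplexCoords, toComplexCoords]

@[simp] theorem toComplexCoords_ofComplexCoords (p : (Fin n → ℂ) × (Fin n → ℂ)) :
    toComplexCoords (ofComplexCoords p) = p := by
  simp [ofComplexCoords, toComplexCoords]

end ComplexCoords

theorem exists_rss_norm_eq_exp {n : ℕ} (ℓ : (Fin n → Quaternion ℝ) →ₗ[ℝ] ℝ) :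
    ∃ F, RSS Set.univ F ∧ ∀ z, ‖F z‖ = Real.exp (ℓ z) := by
  let g : Module.Dual ℂ ((Fin n → ℂ) × (Fin n → ℂ)) :=
    Module.Dual.extendRCLike (ℓ ∘ₗ ofComplexCoords)
  refine ⟨fun z => mkQ (Complex.exp (g (toComplexCoords z))) 0, ⟨?_, ?_⟩, fun z => ?_⟩
  · change DifferentiableOn ℂ (fun p => Complex.exp (g (toComplexCoords (ofComplexCoords p)))) _
    simp only [toComplexCoords_ofComplexCoords]
    exact (LinearMap.toContinuousLinearMap g).differentiable.cexp.differentiableOn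
  · simp only [qu_mkQ]
    exact differentiableOn_const 0
  · rw [norm_mkQ_zero, Complex.norm_exp]
    have hre := Module.Dual.re_extendRCLike_apply (𝕜 := ℂ) (ℓ ∘ₗ ofComplexCoords)
      (toComplexCoords z)
    rw [LinearMap.comp_apply, ofComplexCoords_toComplexCoords] at hre
    exact congrArg Real.exp hre

/-- Proposition 2.18 (part II): for each compact `K ⊆ ℍ^n`, the `ℋ_RSL(ℍ^n)`-convex hull
of `K` is contained in the real convex hull of `K`. -/
theorem rslHull_subset_convexHull {n : ℕ} (K : Set (Fin n → Quaternion ℝ))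
    (hK : IsCompact K) : rslHull K ⊆ convexHull ℝ K := by
  intro z hz
  by_contra hzK
  obtain ⟨ℓ, c, hℓK, hcz⟩ := geometric_hahn_banach_closed_point (convex_convexHull ℝ K)
    hK.convexHull_of_finiteDimensional.isClosed hzK
  obtain ⟨F, hF, hFℓ⟩ := exists_rss_norm_eq_exp ℓ.toLinearMap
  have hsup : ⨆ ζ ∈ K, ‖F ζ‖ ≤ Real.exp c :=
    Real.iSup_le (fun ζ => Real.iSup_le (fun hζ => by
      simpa [hFℓ] using (hℓK ζ (subset_convexHull ℝ K hζ)).le) (Real.exp_pos c).le)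
      (Real.exp_pos c).le
  have hFz := (hz F hF).trans hsup
  rw [hFℓ, Real.exp_le_exp] at hFz
  exact (hFz.trans_lt hcz).false
end
end

section
/- Every open convex subset W of ℍ^n is a domain of ℋ_RSL-holomorphy. -/
noncomputable section

open scoped ComplexConjugate

/-- `W` is a domain of `ℋ_RSL`-holomorphy: for all open sets `U, V` with
`∅ ≠ U ⊆ V ∩ W`, `V ∩ W ≠ V` and `V` connected, there exists a function `f` RSS on `W`
such that no function `g` RSS on `V` agrees with `f` on `U`. -/
def IsRSLDomainOfHolomorphy {n : ℕ} (W : Set (Fin n → Quaternion ℝ)) : Prop :=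
  ∀ U V : Set (Fin n → Quaternion ℝ), IsOpen U → IsOpen V →
    U.Nonempty → U ⊆ V ∩ W → V ∩ W ≠ V → IsConnected V →
    ∃ f : (Fin n → Quaternion ℝ) → Quaternion ℝ, RSS W f ∧
      ∀ g : (Fin n → Quaternion ℝ) → Quaternion ℝ, RSS V g → ¬ Set.EqOn g f U

/-!
Pick `ξ ∈ V \ W` and use the coordinates `p = (t, v) ∈ ℂ^n × ℂ^n` of `z = (t_k + conj(v_k)·j)_k`.
Hahn–Banach separates `ξ` from the open convex set `W` by a complex-linear `ℓ` with
`re ℓ < re ℓ(ξ)` on `W`, so `f = (ℓ - ℓ(ξ))⁻¹ + 0·j` is RSS on `W`. If `g` is RSS on `V` and equals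
`f` on `U`, its first component `h` is holomorphic on the connected set `V` and satisfies
`(ℓ - ℓ(ξ)) · h = 1` on `U`, hence on all of `V` by the identity principle; at `ξ` the left side
is `0`.
-/

open Filter Set Metric Topology

section IdentityPrinciple

variable {E : Type*} [NormedAddCommGroup E] [NormedSpace ℂ E] {G : E → ℂ} {s : Set E}

/-- On the complex line through `q` and `w` this is the one-variable identity theorem, since the
preimage of `s` in `ℂ` is convex. -/
theorem eqOn_zero_of_convex (hs : IsOpen s) (hconv : Convex ℝ s)
    (hG : DifferentiableOn ℂ G s) {q : E} (hq : q ∈ s) (hq0 : G =ᶠ[𝓝 q] 0) :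
    EqOn G 0 s := by
  intro w hw
  set line : ℂ → E := fun t => q + t • (w - q)
  have hline : Continuous line := by fun_prop
  set T : Set ℂ := line ⁻¹' s
  have hTconv : Convex ℝ T :=
    (hconv.translate_preimage_right q).linear_preimage
      ((LinearMap.toSpanSingleton ℂ E (w - q)).restrictScalars ℝ)
  have hGline : AnalyticOnNhd ℂ (G ∘ line) T :=
    (hG.comp (by fun_prop : Differentiable ℂ line).differentiableOn fun _ ht => ht).analyticOnNhd
      (hs.preimage hline)
  have h0 : G ∘ line =ᶠ[𝓝 0] 0 := hq0.comp_tendsto (hline.tendsto' 0 q (by simp [line]))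
  simpa [line] using hGline.eqOn_zero_of_preconnected_of_eventuallyEq_zero hTconv.isPreconnected
    (by simpa [T, line] using hq) h0 (show (1 : ℂ) ∈ T by simpa [T, line] using hw)

theorem eqOn_zero_of_isPreconnected (hs : IsOpen s) (hc : IsPreconnected s)
    (hG : DifferentiableOn ℂ G s) {x : E} (hx : x ∈ s) (hx0 : G =ᶠ[𝓝 x] 0) :
    EqOn G 0 s := by
  have hsub : s ⊆ {p | G =ᶠ[𝓝 p] 0} := by
    refine hc.subset_of_closure_inter_subset isOpen_setOfPred_eventually_nhds ⟨x, hx, hx0⟩ ?_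
    rintro p ⟨hpcl, hps⟩
    obtain ⟨r, hr, hball⟩ := Metric.isOpen_iff.1 hs p hps
    obtain ⟨q, hq, hq0⟩ := mem_closure_iff_nhds.1 hpcl _ (ball_mem_nhds p hr)
    exact eventually_of_mem (ball_mem_nhds p hr)
      (eqOn_zero_of_convex isOpen_ball (convex_ball p r) (hG.mono hball) hq hq0)
  exact fun p hp => (hsub hp).self_of_nhds

theorem ne_zero_of_mul_eqOn_one {u h : E → ℂ} {U V : Set E} (hV : IsOpen V)
    (hVc : IsPreconnected V) (hu : DifferentiableOn ℂ u V) (hh : DifferentiableOn ℂ h V)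
    (hU : IsOpen U) (hUne : U.Nonempty) (hUV : U ⊆ V) (hone : EqOn (u * h) 1 U) :
    ∀ p ∈ V, u p ≠ 0 := by
  obtain ⟨x, hx⟩ := hUne
  have hG : EqOn (u * h - 1) 0 V :=
    eqOn_zero_of_isPreconnected hV hVc ((hu.mul hh).sub_const 1) (hUV hx)
      (eventually_of_mem (hU.mem_nhds hx) fun p hp => sub_eq_zero.2 (hone hp))
  intro p hp hup
  simpa [hup] using hG hp

end IdentityPrinciple

/-- `(t, v) ↦ (t_k + conj(v_k)·j)_k`: the coordinates in which the first component of an RSS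
function is holomorphic. -/
def quatCoords (n : ℕ) : ((Fin n → ℂ) × (Fin n → ℂ)) ≃L[ℝ] (Fin n → Quaternion ℝ) :=
  LinearEquiv.toContinuousLinearEquiv
    { toFun := fun p k => mkQ (p.1 k) (conj (p.2 k))
      invFun := fun z => (fun k => qt (z k), fun k => conj (qu (z k)))
      map_add' := fun p p' => by funext k; ext <;> simp <;> simp [mkQ]
      map_smul' := fun r p => by funext k; ext <;> simp <;> simp [mkQ]
      left_inv := fun p => by ext <;> simp [mkQ, qt, qu, Complex.ext_iff]
      right_inv := fun z => by funext k; ext <;> simp [mkQ, qt, qu] }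

theorem RSS.differentiableOn_qt_comp_quatCoords {n : ℕ} {V : Set (Fin n → Quaternion ℝ)}
    {g : (Fin n → Quaternion ℝ) → Quaternion ℝ} (hg : RSS V g) :
    DifferentiableOn ℂ (fun p => qt (g (quatCoords n p))) (quatCoords n ⁻¹' V) :=
  hg.1

theorem rss_mkQ_zero_of_differentiableOn {n : ℕ} {W : Set (Fin n → Quaternion ℝ)}
    {F : (Fin n → ℂ) × (Fin n → ℂ) → ℂ}
    (hF : DifferentiableOn ℂ F (quatCoords n ⁻¹' W)) :
    RSS W fun z => mkQ (F ((quatCoords n).symm z)) 0 := by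
  refine ⟨hF.congr fun p _ => ?_, (differentiableOn_const 0).congr fun _ _ => rfl⟩
  change qt (mkQ (F ((quatCoords n).symm (quatCoords n p))) 0) = F p
  rw [ContinuousLinearEquiv.symm_apply_apply]
  rfl

/-- Note 2.18.1 (quaternion `ℋ_RSL`-version of Henkin–Leiterer Corollary 1.3.9/1.3.10):
every open convex subset `W` of `ℍ^n` is a domain of `ℋ_RSL`-holomorphy. -/
theorem isRSLDomainOfHolomorphy_of_convex {n : ℕ} (W : Set (Fin n → Quaternion ℝ))
    (hWopen : IsOpen W) (hWconv : Convex ℝ W) :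
    IsRSLDomainOfHolomorphy W := by
  intro U V hUopen hVopen hUne hUsub hVW hVconn
  obtain ⟨ξ, hξV, hξW⟩ : ∃ ξ ∈ V, ξ ∉ W := not_subset.1 (mt inter_eq_left.2 hVW)
  set Φ := quatCoords n
  obtain ⟨ℓ, hℓ⟩ := RCLike.geometric_hahn_banach_open_point (𝕜 := ℂ)
    (hWconv.linear_preimage Φ.toLinearMap) (hWopen.preimage Φ.continuous)
    (x := Φ.symm ξ) (by simpa using hξW)
  set c := ℓ (Φ.symm ξ)
  have hℓW : ∀ p ∈ Φ ⁻¹' W, ℓ p - c ≠ 0 := fun p hp =>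
    sub_ne_zero.2 fun h => (hℓ p hp).ne (congrArg Complex.re h)
  refine ⟨fun z => mkQ (ℓ (Φ.symm z) - c)⁻¹ 0,
    rss_mkQ_zero_of_differentiableOn ((ℓ.differentiable.sub_const c).differentiableOn.inv hℓW), ?_⟩
  intro g hg hgf
  refine ne_zero_of_mul_eqOn_one (hVopen.preimage Φ.continuous)
    (Φ.toHomeomorph.isConnected_preimage.2 hVconn).isPreconnected
    (ℓ.differentiable.sub_const c).differentiableOn hg.differentiableOn_qt_comp_quatCoords
    (hUopen.preimage Φ.continuous) ?_ (preimage_mono fun z hz => (hUsub hz).1) ?_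
    (Φ.symm ξ) (by simpa using hξV) (sub_self c)
  · obtain ⟨z, hz⟩ := hUne
    exact ⟨Φ.symm z, by simpa using hz⟩
  · intro p hp
    have hgp : g (Φ p) = mkQ (ℓ p - c)⁻¹ 0 := by simpa using hgf hp
    change (ℓ p - c) * qt (g (Φ p)) = 1
    rw [hgp]
    exact mul_inv_cancel₀ (hℓW p (hUsub hp).2)
end
end

section
/- Let ρ : ℍ^n → ℝ be twice continuously differentiable and strongly convex with constant ε₀ > 0, and set U := {z ∈ ℍ^n : ρ(z) < 0}. Then v_ρ is a quaternion boundary distinguishing map for U: for every ζ in the topological frontier of U and every z ∈ U, the quaternion ⟨v_ρ(ζ); ζ − z⟩ is nonzero; in fact its real part is strictly positive. -/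
/-!
Along every line a function with nonnegative second derivative is a convex function of one real
variable, so it lies above its tangent planes: `ρ z ≥ ρ ζ + Dρ(ζ)(z - ζ)`. On the frontier of
`U = {ρ < 0}` we have `ρ ζ = 0`, hence `Re⟨v_ρ(ζ); ζ - z⟩ = Dρ(ζ)(ζ - z) ≥ -ρ z > 0` for `z ∈ U`.
-/

noncomputable section

/-- The canonical quaternion scalar product on `ℍ^n`: `⟨a; b⟩ = ∑ l, star (a l) * b l`.
Its real part is the standard real (Euclidean) inner product of `a` and `b` in `ℝ^{4n}`. -/
def qip {n : ℕ} (a b : Fin n → Quaternion ℝ) : Quaternion ℝ :=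
  ∑ l, star (a l) * b l

open Set

section SecondDerivativeNonneg

variable {E F : Type*} [NormedAddCommGroup E] [NormedSpace ℝ E]
  [NormedAddCommGroup F] [NormedSpace ℝ F]

theorem DifferentiableAt.hasDerivAt_comp_add_smul {f : E → F} {x h : E} {t : ℝ}
    (hf : DifferentiableAt ℝ f (x + t • h)) :
    HasDerivAt (fun s : ℝ => f (x + s • h)) (fderiv ℝ f (x + t • h) h) t := by
  refine hf.hasFDerivAt.comp_hasDerivAt t ?_
  simpa using ((hasDerivAt_id t).smul_const h).const_add x

variable {f : E → ℝ}

theorem convexOn_comp_add_smul_of_fderiv_fderiv_nonneg (hf : Differentiable ℝ f)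
    (hf' : Differentiable ℝ (fderiv ℝ f)) (hf'' : ∀ x h, 0 ≤ fderiv ℝ (fderiv ℝ f) x h h)
    (x h : E) : ConvexOn ℝ univ fun t : ℝ => f (x + t • h) := by
  have hderiv2 (t : ℝ) : HasDerivAt (fun s => fderiv ℝ f (x + s • h) h)
      (fderiv ℝ (fderiv ℝ f) (x + t • h) h h) t :=
    (hf' _).hasDerivAt_comp_add_smul.clm_apply (hasDerivAt_const t h) |>.congr_deriv (by simp)
  exact convexOn_of_hasDerivWithinAt2_nonneg convex_univ
    (fun t _ => (hf _).hasDerivAt_comp_add_smul.continuousAt.continuousWithinAt)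
    (fun t _ => (hf _).hasDerivAt_comp_add_smul.hasDerivWithinAt)
    (fun t _ => (hderiv2 t).hasDerivWithinAt) (fun t _ => hf'' _ h)

theorem add_fderiv_sub_le_of_fderiv_fderiv_nonneg (hf : Differentiable ℝ f)
    (hf' : Differentiable ℝ (fderiv ℝ f)) (hf'' : ∀ x h, 0 ≤ fderiv ℝ (fderiv ℝ f) x h h)
    (x y : E) : f x + fderiv ℝ f x (y - x) ≤ f y := by
  have hconvex := convexOn_comp_add_smul_of_fderiv_fderiv_nonneg hf hf' hf'' x (y - x)
  have hslope := hconvex.le_slope_of_hasDerivAt (mem_univ 0) (mem_univ 1) one_pos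
    (hf (x + (0 : ℝ) • (y - x))).hasDerivAt_comp_add_smul
  simp only [slope_def_field, zero_smul, add_zero, one_smul, add_sub_cancel, sub_zero,
    div_one] at hslope
  linarith

end SecondDerivativeNonneg

/-- Lemma 3.9: let `ρ : ℍ^n → ℝ` be a `C²` function which is strongly convex with constant
`ε₀ > 0` (i.e. `D²ρ(x)(h,h) ≥ ε₀‖h‖²`, with `‖h‖² = ∑ l, ‖h l‖²` the Euclidean norm of
`ℝ^{4n}`), let `U = {z : ρ z < 0}`, and let `v_ρ` be the gradient of `ρ`, i.e.
`Re⟨v_ρ(ζ); h⟩ = Dρ(ζ)(h)` for all `h`. Then `v_ρ` is a quaternion boundary distinguishing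
map for `U`: for each `ζ` in the frontier of `U` and each `z ∈ U`, the quaternion
`⟨v_ρ(ζ); ζ − z⟩` is nonzero; in fact its real part is strictly positive. -/
theorem gradient_is_boundary_distinguishing {n : ℕ}
    (ρ : (Fin n → Quaternion ℝ) → ℝ) (hρ : ContDiff ℝ 2 ρ)
    (ε₀ : ℝ) (hε₀ : 0 < ε₀)
    (hconv : ∀ x h : Fin n → Quaternion ℝ,
      ε₀ * ∑ l, ‖h l‖ ^ 2 ≤ fderiv ℝ (fderiv ℝ ρ) x h h)
    (v : (Fin n → Quaternion ℝ) → (Fin n → Quaternion ℝ))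
    (hv : ∀ ζ h : Fin n → Quaternion ℝ, (qip (v ζ) h).re = fderiv ℝ ρ ζ h)
    (U : Set (Fin n → Quaternion ℝ)) (hU : U = {z | ρ z < 0}) :
    ∀ ζ ∈ frontier U, ∀ z ∈ U,
      qip (v ζ) (ζ - z) ≠ 0 ∧ 0 < (qip (v ζ) (ζ - z)).re := by
  subst hU
  intro ζ hζ z (hz : ρ z < 0)
  have hρζ : ρ ζ = 0 := frontier_lt_subset_eq hρ.continuous continuous_const hζ
  have hsupport := add_fderiv_sub_le_of_fderiv_fderiv_nonneg (hρ.differentiable two_ne_zero)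
    ((hρ.fderiv_right (by norm_num)).differentiable one_ne_zero)
    (fun x h => (mul_nonneg hε₀.le (Finset.sum_nonneg fun _ _ => sq_nonneg _)).trans (hconv x h))
    ζ z
  have hre : 0 < (qip (v ζ) (ζ - z)).re := by
    rw [hv, ← neg_sub, map_neg]
    linarith
  exact ⟨fun h0 => hre.ne' (by rw [h0]; rfl), hre⟩
end
end

section
/- Let K ⊆ ℍ^n be compact and let w ∈ ℍ^n with w ∉ convexHull ℝ K. Then there exist ζ ∈ ℍ^n and c ∈ ℝ such that the function f(z) := exp((Σ_{l=1}^n z_l · star(ζ_l)) − c) satisfies ‖f(z)‖ < 1 for every z ∈ K and ‖f(w)‖ = 1. -/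
/-!
Since `‖exp q‖ = e^{Re q}`, it suffices to find a continuous real-linear functional `f` on `ℍ^n`
with `f < f w` on `K`: writing `f z = Re (∑ l, z l * star (ζ l))` (Riesz representation in each
coordinate) and taking `c = f w` gives the claim. By Carathéodory's theorem the convex hull of a
compact set in finite dimensions is compact, so Hahn–Banach strictly separates `w` from it.
-/

open Module Finset

theorem convexHull_eq_biUnion_image_stdSimplex {𝕜 E : Type*} [Field 𝕜] [LinearOrder 𝕜]
    [IsStrictOrderedRing 𝕜] [AddCommGroup E] [Module 𝕜 E] [FiniteDimensional 𝕜 E] (s : Set E) :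
    convexHull 𝕜 s = ⋃ k ∈ range (finrank 𝕜 E + 2),
      (fun p : (Fin k → 𝕜) × (Fin k → E) => ∑ i, p.1 i • p.2 i) ''
        (stdSimplex 𝕜 (Fin k) ×ˢ Set.univ.pi fun _ => s) := by
  apply Set.Subset.antisymm
  · intro x hx
    obtain ⟨ι, _, z, a, hzs, hz, ha0, ha1, rfl⟩ := eq_pos_convex_span_of_mem_convexHull hx
    have hcard : Fintype.card ι < finrank 𝕜 E + 2 :=
      Nat.lt_succ_of_le (hz.card_le_finrank_succ.trans (by gcongr; exact Submodule.finrank_le _))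
    let e := Fintype.equivFin ι
    refine Set.mem_biUnion (mem_range.2 hcard) ⟨(a ∘ e.symm, z ∘ e.symm),
      ⟨⟨fun i => (ha0 _).le, ?_⟩, fun i _ => hzs (Set.mem_range_self _)⟩, ?_⟩
    · simpa [ha1] using e.symm.sum_comp a
    · exact e.symm.sum_comp fun i => a i • z i
  · simp only [Set.iUnion_subset_iff, Set.image_subset_iff]
    rintro k - ⟨a, p⟩ ⟨⟨ha0, ha1⟩, hp⟩
    exact (convex_convexHull 𝕜 s).sum_mem (fun i _ => ha0 i) ha1
      fun i _ => subset_convexHull 𝕜 s (hp i trivial)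

theorem IsCompact.convexHull {E : Type*} [TopologicalSpace E] [AddCommGroup E]
    [IsTopologicalAddGroup E] [Module ℝ E] [ContinuousSMul ℝ E] [FiniteDimensional ℝ E]
    {s : Set E} (hs : IsCompact s) :
    IsCompact (convexHull ℝ s) := by
  rw [convexHull_eq_biUnion_image_stdSimplex]
  refine (range _).isCompact_biUnion fun k _ => ?_
  exact ((isCompact_stdSimplex ℝ _).prod (isCompact_univ_pi fun _ => hs)).image (by fun_prop)

open scoped InnerProductSpace in
theorem StrongDual.exists_eq_sum_inner {ι E : Type*} [Fintype ι] [NormedAddCommGroup E]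
    [InnerProductSpace ℝ E] [CompleteSpace E] (f : StrongDual ℝ (ι → E)) :
    ∃ ζ : ι → E, ∀ z, f z = ∑ l, ⟪ζ l, z l⟫_ℝ := by
  classical
  refine ⟨fun l => (InnerProductSpace.toDual ℝ E).symm
    (f.comp (ContinuousLinearMap.single ℝ (fun _ : ι => E) l)), fun z => ?_⟩
  simp only [InnerProductSpace.toDual_symm_apply, ContinuousLinearMap.comp_apply]
  conv_lhs => rw [← Finset.univ_sum_single z]
  simp [map_sum]

namespace Quaternion

theorem norm_exp_eq_exp_re (q : ℍ[ℝ]) : ‖NormedSpace.exp q‖ = Real.exp q.re := by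
  rw [norm_exp, ← Real.exp_eq_exp_ℝ, Real.norm_of_nonneg (Real.exp_pos _).le]

open scoped InnerProductSpace in
theorem exists_eq_re_sum_mul_star {ι : Type*} [Fintype ι] (f : StrongDual ℝ (ι → ℍ[ℝ])) :
    ∃ ζ : ι → ℍ[ℝ], ∀ z, f z = (∑ l, z l * star (ζ l)).re := by
  obtain ⟨ζ, hζ⟩ := StrongDual.exists_eq_sum_inner f
  refine ⟨ζ, fun z => ?_⟩
  calc f z = ∑ l, (z l * star (ζ l)).re :=
        (hζ z).trans <| sum_congr rfl fun l _ => by rw [real_inner_comm, inner_def]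
    _ = (∑ l, z l * star (ζ l)).re :=
        (map_sum (QuaternionAlgebra.reₗ (-1 : ℝ) 0 (-1)) (fun l => z l * star (ζ l)) univ).symm

end Quaternion

/-- Part of the proof of Proposition 2.18 (part I): if `K ⊆ ℍ^n` is compact and
`w ∉ convexHull ℝ K`, then there are `ζ ∈ ℍ^n` and `c ∈ ℝ` such that the entire function
`f(z) = exp((∑ l, z l * star (ζ l)) − c)` satisfies `‖f z‖ < 1` on `K` and `‖f w‖ = 1`. -/
theorem exists_exp_separating {n : ℕ} (K : Set (Fin n → Quaternion ℝ)) (hK : IsCompact K)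
    (w : Fin n → Quaternion ℝ) (hw : w ∉ convexHull ℝ K) :
    ∃ (ζ : Fin n → Quaternion ℝ) (c : ℝ),
      (∀ z ∈ K, ‖NormedSpace.exp ((∑ l, z l * star (ζ l)) - (c : Quaternion ℝ))‖ < 1) ∧
      ‖NormedSpace.exp ((∑ l, w l * star (ζ l)) - (c : Quaternion ℝ))‖ = 1 := by
  obtain ⟨f, u, hf_lt, hu_lt⟩ := geometric_hahn_banach_closed_point (convex_convexHull ℝ K)
    hK.convexHull.isClosed hw
  obtain ⟨ζ, hζ⟩ := Quaternion.exists_eq_re_sum_mul_star f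
  refine ⟨ζ, f w, fun z hz => ?_, ?_⟩
  · rw [Quaternion.norm_exp_eq_exp_re, Real.exp_lt_one_iff, Quaternion.re_sub, ← hζ,
      Quaternion.re_coe, sub_neg]
    exact (hf_lt z (subset_convexHull ℝ K hz)).trans hu_lt
  · rw [Quaternion.norm_exp_eq_exp_re, Quaternion.re_sub, ← hζ, Quaternion.re_coe, sub_self,
      Real.exp_zero]
end
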